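/- The product ⋆ on ℤ⟨z_2,z_3⟩ is associative: (w ⋆ w') ⋆ w'' = w ⋆ (w' ⋆ w'') for all w, w', w'' in ℤ⟨z_2,z_3⟩. -/

import Mathlib

/-!
Work with reversed words, where appending a letter becomes `List.cons`, and extend `starAux`
bilinearly to `revStar`. The defining recursion then says that `lcons 2` commutes with the
product on either side, and that for all `x`, `y`
`lcons 3 x ⋆ lcons 3 y = lcons 3 (x ⋆ lcons 3 y) + lcons 3 (lcons 3 x ⋆ y) + z₂³ (x ⋆ y)`.
Associativity on three words in `z₂, z₃` follows by induction on their total length: a last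
letter `z₂` is pulled out of both sides; if all three words end in `z₃`, both sides expand by
the second rule into terms matched by the induction hypothesis for seven shorter triples.
Bilinearity extends this to the span of such words, and reversing back gives the theorem.
-/

/-- A word in `ℤ⟨z₂,z₃⟩`, recorded as its list of indices (each `2` or `3`). -/
def IsWord23 (w : List ℕ) : Prop := ∀ k ∈ w, k = 2 ∨ k = 3

/-- Auxiliary star product on *reversed* words (the head of the list is the rightmost
letter `z_k` of the word), with values in the free `ℤ`-module on reversed words. -/
noncomputable def starAux : List ℕ → List ℕ → (List ℕ →₀ ℤ)
  | [], v => Finsupp.single v 1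
  | u, [] => Finsupp.single u 1
  | 2 :: u, v => Finsupp.mapDomain (2 :: ·) (starAux u v)
  | u, 2 :: v => Finsupp.mapDomain (2 :: ·) (starAux u v)
  | 3 :: u, 3 :: v =>
      Finsupp.mapDomain (3 :: ·) (starAux u (3 :: v)) +
      Finsupp.mapDomain (3 :: ·) (starAux (3 :: u) v) +
      Finsupp.mapDomain (fun l => 2 :: 2 :: 2 :: l) (starAux u v)
  | _, _ => 0
termination_by u v => u.length + v.length

/-- The star product of two words of `ℤ⟨z₂,z₃⟩` (written in natural left-to-right order),
as a `ℤ`-linear combination of words. -/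
noncomputable def starW (u v : List ℕ) : List ℕ →₀ ℤ :=
  Finsupp.mapDomain List.reverse (starAux u.reverse v.reverse)

/-- The `ℤ`-bilinear extension of the star product to the free `ℤ`-module on words. -/
noncomputable def starHS : (List ℕ →₀ ℤ) →ₗ[ℤ] (List ℕ →₀ ℤ) →ₗ[ℤ] (List ℕ →₀ ℤ) :=
  Finsupp.lsum ℤ fun u => LinearMap.toSpanSingleton ℤ _
    (Finsupp.lsum ℤ fun v => LinearMap.toSpanSingleton ℤ _ (starW u v))

open Finsupp

lemma starAux_nil_left (v : List ℕ) : starAux [] v = single v 1 := by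
  rw [starAux]

lemma starAux_nil_right (u : List ℕ) : starAux u [] = single u 1 := by
  cases u with
  | nil => rw [starAux]
  | cons a u => rw [starAux]; simp

lemma starAux_two_left (u v : List ℕ) :
    starAux (2 :: u) v = mapDomain (2 :: ·) (starAux u v) := by
  cases v with
  | nil => rw [starAux_nil_right, starAux_nil_right, mapDomain_single]
  | cons b v => rw [starAux]; simp

lemma starAux_two_right (u v : List ℕ) :
    starAux u (2 :: v) = mapDomain (2 :: ·) (starAux u v) := by
  induction u generalizing v with
  | nil => rw [starAux_nil_left, starAux_nil_left, mapDomain_single]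
  | cons a u ih =>
    by_cases ha : a = 2
    · rw [ha, starAux_two_left, ih, starAux_two_left]
    · rw [starAux] <;> simp_all

lemma starAux_three_three (u v : List ℕ) : starAux (3 :: u) (3 :: v) =
    mapDomain (3 :: ·) (starAux u (3 :: v)) + mapDomain (3 :: ·) (starAux (3 :: u) v) +
      mapDomain (fun l => 2 :: 2 :: 2 :: l) (starAux u v) := by
  rw [starAux]

noncomputable def lcons (k : ℕ) : (List ℕ →₀ ℤ) →ₗ[ℤ] (List ℕ →₀ ℤ) :=
  lmapDomain ℤ ℤ (k :: ·)

noncomputable def revStar : (List ℕ →₀ ℤ) →ₗ[ℤ] (List ℕ →₀ ℤ) →ₗ[ℤ] (List ℕ →₀ ℤ) :=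
  lsum ℤ fun u => LinearMap.toSpanSingleton ℤ _
    (lsum ℤ fun v => LinearMap.toSpanSingleton ℤ _ (starAux u v))

lemma single_cons (a : ℕ) (u : List ℕ) : single (a :: u) (1 : ℤ) = lcons a (single u 1) := by
  simp [lcons]

lemma revStar_single_single (u v : List ℕ) :
    revStar (single u 1) (single v 1) = starAux u v := by
  simp [revStar]

lemma revStar_nil_left (y : List ℕ →₀ ℤ) : revStar (single [] 1) y = y := by
  have : revStar (single [] 1) = LinearMap.id := by
    ext v : 2
    simp [revStar_single_single, starAux_nil_left]
  rw [this, LinearMap.id_apply]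

lemma revStar_nil_right (x : List ℕ →₀ ℤ) : revStar x (single [] 1) = x := by
  have : revStar.flip (single [] 1) = LinearMap.id := by
    ext u : 2
    simp [revStar_single_single, starAux_nil_right]
  rw [← LinearMap.flip_apply revStar, this, LinearMap.id_apply]

lemma revStar_lcons_two_left (x y : List ℕ →₀ ℤ) :
    revStar (lcons 2 x) y = lcons 2 (revStar x y) := by
  have : revStar ∘ₗ lcons 2 = revStar.compr₂ (lcons 2) := by
    ext u v : 4
    simp [revStar_single_single, starAux_two_left, lcons]
  exact LinearMap.congr_fun₂ this x y

lemma revStar_lcons_two_right (x y : List ℕ →₀ ℤ) :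
    revStar x (lcons 2 y) = lcons 2 (revStar x y) := by
  have : revStar.compl₂ (lcons 2) = revStar.compr₂ (lcons 2) := by
    ext u v : 4
    simp [revStar_single_single, starAux_two_right, lcons]
  exact LinearMap.congr_fun₂ this x y

lemma revStar_lcons_three_lcons_three (x y : List ℕ →₀ ℤ) :
    revStar (lcons 3 x) (lcons 3 y) =
      lcons 3 (revStar x (lcons 3 y)) + lcons 3 (revStar (lcons 3 x) y) +
        lcons 2 (lcons 2 (lcons 2 (revStar x y))) := by
  have : (revStar ∘ₗ lcons 3).compl₂ (lcons 3) =
      (revStar.compl₂ (lcons 3)).compr₂ (lcons 3) + (revStar ∘ₗ lcons 3).compr₂ (lcons 3) +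
        revStar.compr₂ (lcons 2 ∘ₗ lcons 2 ∘ₗ lcons 2) := by
    ext u v : 4
    simp [revStar_single_single, starAux_three_three, lcons, ← mapDomain_comp]
    rfl
  exact LinearMap.congr_fun₂ this x y

theorem revStar_assoc_single : ∀ u v w : List ℕ, IsWord23 u → IsWord23 v → IsWord23 w →
    revStar (revStar (single u 1) (single v 1)) (single w 1) =
      revStar (single u 1) (revStar (single v 1) (single w 1))
  | [], _, _, _, _, _ | _, [], _, _, _, _ => by
    simp only [revStar_nil_left, revStar_nil_right]
  | _, _, [], _, _, _ => by simp only [revStar_nil_right]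
  | a :: u, b :: v, c :: w, hu, hv, hw => by
    obtain ⟨ha, hu'⟩ := List.forall_mem_cons.1 hu
    obtain ⟨hb, hv'⟩ := List.forall_mem_cons.1 hv
    obtain ⟨hc, hw'⟩ := List.forall_mem_cons.1 hw
    rcases ha with rfl | rfl
    · rw [single_cons 2 u, revStar_lcons_two_left, revStar_lcons_two_left,
        revStar_lcons_two_left, revStar_assoc_single u _ _ hu' hv hw]
    rcases hb with rfl | rfl
    · rw [single_cons 2 v, revStar_lcons_two_right, revStar_lcons_two_left,
        revStar_lcons_two_left, revStar_lcons_two_right, revStar_assoc_single _ v _ hu hv' hw]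
    rcases hc with rfl | rfl
    · rw [single_cons 2 w, revStar_lcons_two_right, revStar_lcons_two_right,
        revStar_lcons_two_right, revStar_assoc_single _ _ w hu hv hw']
    -- The cross terms `lcons 3 (u ⋆ 3v) ⋆ w + lcons 3 (3u ⋆ v) ⋆ w` are not products of three
    -- words; `h₂` trades them for `(3u ⋆ 3v) ⋆ w` minus a `z₂³` term.
    let z222 : (List ℕ →₀ ℤ) → (List ℕ →₀ ℤ) := fun x => lcons 2 (lcons 2 (lcons 2 x))
    have h₁ := congrArg (lcons 3) (revStar_assoc_single u (3 :: v) (3 :: w) hu' hv hw)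
    have h₂ := congrArg (lcons 3) (revStar_assoc_single (3 :: u) (3 :: v) w hu hv hw')
    have h₃ := congrArg (lcons 3 ∘ z222) (revStar_assoc_single u v w hu' hv' hw')
    have h₄ := congrArg z222 (revStar_assoc_single u (3 :: v) w hu' hv hw')
    have h₅ := congrArg z222 (revStar_assoc_single (3 :: u) v w hu hv' hw')
    have h₆ := congrArg z222 (revStar_assoc_single u v (3 :: w) hu' hv' hw)
    have h₇ := congrArg (lcons 3) (revStar_assoc_single (3 :: u) v (3 :: w) hu hv' hw)
    simp only [z222, Function.comp_apply, single_cons, revStar_lcons_three_lcons_three,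
      revStar_lcons_two_left, revStar_lcons_two_right, map_add, LinearMap.add_apply]
      at h₁ h₂ h₃ h₄ h₅ h₆ h₇ ⊢
    linear_combination (norm := module) h₁ + h₂ - h₃ + h₄ + h₅ + h₆ + h₇
termination_by u v w => u.length + v.length + w.length

theorem revStar_assoc {x y z : List ℕ →₀ ℤ} (hx : x ∈ supported ℤ ℤ {w | IsWord23 w})
    (hy : y ∈ supported ℤ ℤ {w | IsWord23 w}) (hz : z ∈ supported ℤ ℤ {w | IsWord23 w}) :
    revStar (revStar x y) z = revStar x (revStar y z) := by
  rw [supported_eq_span_single] at hx hy hz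
  have on_z : ∀ u v, IsWord23 u → IsWord23 v →
      revStar (revStar (single u 1) (single v 1)) z =
        revStar (single u 1) (revStar (single v 1) z) := by
    intro u v hu hv
    refine LinearMap.eqOn_span (f := revStar (revStar (single u 1) (single v 1)))
      (g := revStar (single u 1) ∘ₗ revStar (single v 1)) ?_ hz
    rintro _ ⟨w, hw, rfl⟩
    exact revStar_assoc_single u v w hu hv hw
  have on_yz : ∀ u, IsWord23 u →
      revStar (revStar (single u 1) y) z = revStar (single u 1) (revStar y z) := by
    intro u hu
    refine LinearMap.eqOn_span (f := revStar.flip z ∘ₗ revStar (single u 1))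
      (g := revStar (single u 1) ∘ₗ revStar.flip z) ?_ hy
    rintro _ ⟨v, hv, rfl⟩
    exact on_z u v hu hv
  refine LinearMap.eqOn_span (f := revStar.flip z ∘ₗ revStar.flip y)
    (g := revStar.flip (revStar y z)) ?_ hx
  rintro _ ⟨u, hu, rfl⟩
  exact on_yz u hu

noncomputable def lreverse : (List ℕ →₀ ℤ) →ₗ[ℤ] (List ℕ →₀ ℤ) :=
  lmapDomain ℤ ℤ List.reverse

lemma lreverse_lreverse (x : List ℕ →₀ ℤ) : lreverse (lreverse x) = x := by
  rw [lreverse, ← LinearMap.comp_apply, ← lmapDomain_comp, List.reverse_involutive.comp_self,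
    lmapDomain_id, LinearMap.id_apply]

lemma lreverse_mem_supported {x : List ℕ →₀ ℤ} (hx : x ∈ supported ℤ ℤ {w | IsWord23 w}) :
    lreverse x ∈ supported ℤ ℤ {w | IsWord23 w} := by
  refine supported_comap_lmapDomain ℤ ℤ List.reverse _ (supported_mono ?_ hx)
  intro w hw k hk
  exact hw k (List.mem_reverse.1 hk)

lemma starHS_eq_lreverse (x y : List ℕ →₀ ℤ) :
    starHS x y = lreverse (revStar (lreverse x) (lreverse y)) := by
  have : starHS = (revStar.compl₁₂ lreverse lreverse).compr₂ lreverse := by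
    ext u v : 4
    simp [starHS, starW, lreverse, revStar_single_single]
  exact LinearMap.congr_fun₂ this x y

/-- The star product on `ℤ⟨z₂,z₃⟩` is associative. -/
theorem star_assoc (a b c : List ℕ →₀ ℤ)
    (ha : ∀ w ∈ a.support, IsWord23 w) (hb : ∀ w ∈ b.support, IsWord23 w)
    (hc : ∀ w ∈ c.support, IsWord23 w) :
    starHS (starHS a b) c = starHS a (starHS b c) := by
  simp only [starHS_eq_lreverse, lreverse_lreverse]
  rw [revStar_assoc (lreverse_mem_supported ha) (lreverse_mem_supported hb)
    (lreverse_mem_supported hc)]
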